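/- Let q be a complex number with |q| = 1, let (V₁,V₂) be a q-commutative pair of isometries on a complex Hilbert space H, and set V = V₁V₂. Then for every integer j ≥ 1 one has V^{*j} V₁ = q^{j−1} V₂* V^{*(j−1)} and V^{*j} V₂ = (conj q)^{j} V₁* V^{*(j−1)}. -/

import Mathlib

open ContinuousLinearMap

/-!
Put `W = (V₁V₂)* = V₂*V₁*`. Taking adjoints in `V₁V₂ = q V₂V₁` gives `V₂*V₁* = q̄ V₁*V₂*`, and
since `q q̄ = 1` also `V₁*V₂* = q V₂*V₁*`; hence `W` `q`-commutes with `V₂*` and `q̄`-commutes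
with `V₁*`. Now `W V₁ = V₂*` and `W V₂ = q̄ V₁*` because the `Vᵢ` are isometries, and moving the
remaining `W^(j-1)` past `V₂*` resp. `V₁*` produces the powers of `q` resp. `q̄`.
-/

theorem pow_mul_eq_smul_mul_pow {S R : Type*} [Monoid S] [Monoid R] [MulAction S R]
    [IsScalarTower S R R] [SMulCommClass S R R] {c : S} {W X : R}
    (h : W * X = c • (X * W)) (n : ℕ) : W ^ n * X = c ^ n • (X * W ^ n) := by
  induction n with
  | zero => simp
  | succ n ih =>
    rw [pow_succ', mul_assoc, ih, mul_smul_comm, ← mul_assoc, h, smul_mul_assoc, smul_smul,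
      ← pow_succ, mul_assoc, ← pow_succ']

section StarAlgebra

variable {R : Type*} [Semiring R] [StarRing R] [Algebra ℂ R] [StarModule ℂ R] {q : ℂ} {V₁ V₂ : R}

theorem star_mul_star_eq_conj_smul (hcomm : V₁ * V₂ = q • (V₂ * V₁)) :
    star V₂ * star V₁ = starRingEnd ℂ q • (star V₁ * star V₂) := by
  simpa only [star_mul, star_smul, Complex.star_def] using congrArg star hcomm

theorem star_mul_star_eq_smul (hq : ‖q‖ = 1) (hcomm : V₁ * V₂ = q • (V₂ * V₁)) :
    star V₁ * star V₂ = q • (star V₂ * star V₁) := by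
  have hq₀ : q ≠ 0 := norm_ne_zero_iff.mp (hq ▸ one_ne_zero)
  rw [star_mul_star_eq_conj_smul hcomm, smul_smul, ← Complex.inv_eq_conj hq,
    mul_inv_cancel₀ hq₀, one_smul]

theorem star_mul_mul_star_right_eq_smul (hq : ‖q‖ = 1) (hcomm : V₁ * V₂ = q • (V₂ * V₁)) :
    star (V₁ * V₂) * star V₂ = q • (star V₂ * star (V₁ * V₂)) := by
  rw [star_mul, mul_assoc, star_mul_star_eq_smul hq hcomm, mul_smul_comm]

theorem star_mul_mul_star_left_eq_conj_smul (hcomm : V₁ * V₂ = q • (V₂ * V₁)) :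
    star (V₁ * V₂) * star V₁ = starRingEnd ℂ q • (star V₁ * star (V₁ * V₂)) := by
  rw [star_mul, ← mul_assoc, ← smul_mul_assoc, ← star_mul_star_eq_conj_smul hcomm]

theorem star_mul_pow_succ_mul_left (hq : ‖q‖ = 1) (hV₁ : star V₁ * V₁ = 1)
    (hcomm : V₁ * V₂ = q • (V₂ * V₁)) (k : ℕ) :
    star (V₁ * V₂) ^ (k + 1) * V₁ = q ^ k • (star V₂ * star (V₁ * V₂) ^ k) := by
  have hW : star (V₁ * V₂) * V₁ = star V₂ := by rw [star_mul, mul_assoc, hV₁, mul_one]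
  rw [pow_succ, mul_assoc, hW,
    pow_mul_eq_smul_mul_pow (star_mul_mul_star_right_eq_smul hq hcomm)]

theorem star_mul_pow_succ_mul_right (hV₂ : star V₂ * V₂ = 1)
    (hcomm : V₁ * V₂ = q • (V₂ * V₁)) (k : ℕ) :
    star (V₁ * V₂) ^ (k + 1) * V₂
      = starRingEnd ℂ q ^ (k + 1) • (star V₁ * star (V₁ * V₂) ^ k) := by
  have hW : star (V₁ * V₂) * V₂ = starRingEnd ℂ q • star V₁ := by
    rw [star_mul, star_mul_star_eq_conj_smul hcomm, smul_mul_assoc, mul_assoc, hV₂, mul_one]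
  rw [pow_succ, mul_assoc, hW, mul_smul_comm,
    pow_mul_eq_smul_mul_pow (star_mul_mul_star_left_eq_conj_smul hcomm), smul_smul, ← pow_succ']

end StarAlgebra

theorem stmt_2 {H : Type*} [NormedAddCommGroup H] [InnerProductSpace ℂ H] [CompleteSpace H]
    (q : ℂ) (hq : ‖q‖ = 1) (V₁ V₂ : H →L[ℂ] H)
    (hV₁ : adjoint V₁ ∘L V₁ = 1) (hV₂ : adjoint V₂ ∘L V₂ = 1)
    (hcomm : V₁ ∘L V₂ = q • (V₂ ∘L V₁)) (j : ℕ) (hj : 1 ≤ j) :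
    ((adjoint (V₁ ∘L V₂)) ^ j) ∘L V₁
        = q ^ (j - 1) • (adjoint V₂ ∘L ((adjoint (V₁ ∘L V₂)) ^ (j - 1))) ∧
    ((adjoint (V₁ ∘L V₂)) ^ j) ∘L V₂
        = (starRingEnd ℂ q) ^ j • (adjoint V₁ ∘L ((adjoint (V₁ ∘L V₂)) ^ (j - 1))) := by
  obtain ⟨k, rfl⟩ := Nat.exists_eq_add_of_le' hj
  simp only [← mul_def, ← star_eq_adjoint, Nat.add_sub_cancel] at hV₁ hV₂ hcomm ⊢
  exact ⟨star_mul_pow_succ_mul_left hq hV₁ hcomm k, star_mul_pow_succ_mul_right hV₂ hcomm k⟩
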